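/- Let d ≥ 2, let π_1, π_2 ∈ Ξ_d and let n_1, n_2 ≥ 2. Define T_U = (n_1/(n_1−1)) π̂_1ᵀπ̂_1 − 1/(n_1−1) + (n_2/(n_2−1)) π̂_2ᵀπ̂_2 − 1/(n_2−1) − 2 π̂_1ᵀπ̂_2. Then E(T_U) = ‖π_1 − π_2‖²; that is, T_U is an unbiased estimator of the squared Euclidean distance between the two probability vectors. -/

import Mathlib

open MeasureTheory

/-- The categorical distribution on `Fin d` with probability weights `π`. -/
noncomputable def catMeasure {d : ℕ} (π : Fin d → ℝ) : Measure (Fin d) :=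
  ∑ j, (ENNReal.ofReal (π j)) • Measure.dirac j

/-- The joint law of an i.i.d. sample of size `n` from the categorical distribution `π`. -/
noncomputable def iidMeasure {d : ℕ} (n : ℕ) (π : Fin d → ℝ) : Measure (Fin n → Fin d) :=
  Measure.pi fun _ => catMeasure π

/-- Empirical relative frequency of category `j` in the sample `x`. -/
noncomputable def empFreq {d n : ℕ} (x : Fin n → Fin d) (j : Fin d) : ℝ :=
  ((Finset.univ.filter fun s => x s = j).card : ℝ) / n

-- sum over all functions of product = product of sums
lemma sum_prod_eq {d n : ℕ} (g : Fin n → Fin d → ℝ) :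
    ∑ x : Fin n → Fin d, ∏ s, g s (x s) = ∏ s, ∑ j, g s j := by
  rw [Finset.prod_univ_sum, Fintype.piFinset_univ]

-- first moment
lemma E1 {d n : ℕ} (π : Fin d → ℝ) (hs : ∑ j, π j = 1) (s₀ : Fin n) (f : Fin d → ℝ) :
    ∑ x : Fin n → Fin d, (∏ s, π (x s)) * f (x s₀) = ∑ j, π j * f j := by
  have : ∀ x : Fin n → Fin d, (∏ s, π (x s)) * f (x s₀)
      = ∏ s, (π (x s) * (if s = s₀ then f (x s) else 1)) := by
    intro x
    rw [Finset.prod_mul_distrib, Finset.prod_ite_eq' Finset.univ s₀ (fun s => f (x s))]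
    simp
  simp_rw [this]
  rw [sum_prod_eq (fun s j => π j * (if s = s₀ then f j else 1))]
  have : ∀ s : Fin n, (∑ j, π j * (if s = s₀ then f j else 1))
      = if s = s₀ then ∑ j, π j * f j else 1 := by
    intro s
    by_cases h : s = s₀ <;> simp [h, hs]
  simp_rw [this]
  rw [Finset.prod_ite_eq' Finset.univ s₀ (fun _ => ∑ j, π j * f j)]
  simp

-- second moment, distinct indices
lemma E2 {d n : ℕ} (π : Fin d → ℝ) (hs : ∑ j, π j = 1) {s₀ t₀ : Fin n} (hst : s₀ ≠ t₀)
    (f g : Fin d → ℝ) :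
    ∑ x : Fin n → Fin d, (∏ s, π (x s)) * (f (x s₀) * g (x t₀))
      = (∑ j, π j * f j) * (∑ j, π j * g j) := by
  have key : ∀ (F : Fin n → ℝ),
      (∏ s, (if s = s₀ then F s₀ else if s = t₀ then F t₀ else 1)) = F s₀ * F t₀ → True := fun _ _ => trivial
  have : ∀ x : Fin n → Fin d, (∏ s, π (x s)) * (f (x s₀) * g (x t₀))
      = ∏ s, (π (x s) * (if s = s₀ then f (x s) else if s = t₀ then g (x s) else 1)) := by
    intro x
    rw [Finset.prod_mul_distrib]
    congr 1
    rw [← Finset.mul_prod_erase Finset.univ _ (Finset.mem_univ s₀)]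
    have ht : t₀ ∈ Finset.univ.erase s₀ := Finset.mem_erase.2 ⟨(Ne.symm hst), Finset.mem_univ t₀⟩
    rw [← Finset.mul_prod_erase _ _ ht]
    have h1 : ∏ s ∈ (Finset.univ.erase s₀).erase t₀,
        (if s = s₀ then f (x s) else if s = t₀ then g (x s) else 1) = 1 := by
      apply Finset.prod_eq_one
      intro s hsm
      obtain ⟨hs1, hs2⟩ := Finset.mem_erase.1 hsm
      obtain ⟨hs3, _⟩ := Finset.mem_erase.1 hs2
      simp [hs1, hs3]
    rw [h1]
    simp [hst, Ne.symm hst]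
  simp_rw [this]
  rw [sum_prod_eq (fun s j => π j * (if s = s₀ then f j else if s = t₀ then g j else 1))]
  have : ∀ s : Fin n, (∑ j, π j * (if s = s₀ then f j else if s = t₀ then g j else 1))
      = if s = s₀ then (∑ j, π j * f j) else if s = t₀ then (∑ j, π j * g j) else 1 := by
    intro s
    by_cases h1 : s = s₀
    · simp [h1]
    · by_cases h2 : s = t₀ <;> simp [h1, h2, hs]
  simp_rw [this]
  rw [← Finset.mul_prod_erase Finset.univ _ (Finset.mem_univ s₀)]
  have ht : t₀ ∈ Finset.univ.erase s₀ := Finset.mem_erase.2 ⟨(Ne.symm hst), Finset.mem_univ t₀⟩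
  rw [← Finset.mul_prod_erase _ _ ht]
  have h1 : ∏ s ∈ (Finset.univ.erase s₀).erase t₀,
      (if s = s₀ then (∑ j, π j * f j) else if s = t₀ then (∑ j, π j * g j) else 1) = 1 := by
    apply Finset.prod_eq_one
    intro s hsm
    obtain ⟨hs1, hs2⟩ := Finset.mem_erase.1 hsm
    obtain ⟨hs3, _⟩ := Finset.mem_erase.1 hs2
    simp [hs1, hs3]
  rw [h1]
  simp [hst, Ne.symm hst]

lemma empFreq_eq {d n : ℕ} (x : Fin n → Fin d) (j : Fin d) :
    empFreq x j = (∑ s, if x s = j then (1:ℝ) else 0) / n := by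
  rw [empFreq, Finset.card_filter]
  push_cast
  rfl

instance catFin {d : ℕ} (π : Fin d → ℝ) : IsFiniteMeasure (catMeasure π) := by
  constructor
  rw [catMeasure, Measure.finset_sum_apply]
  simp only [Measure.smul_apply, smul_eq_mul, measure_univ, mul_one]
  exact ENNReal.sum_lt_top.2 fun a _ => ENNReal.ofReal_lt_top

lemma catMeasure_singleton {d : ℕ} (π : Fin d → ℝ) (j : Fin d) :
    catMeasure π {j} = ENNReal.ofReal (π j) := by
  rw [catMeasure, Measure.finset_sum_apply]
  simp [Measure.dirac_apply, Set.indicator_apply, Finset.sum_ite_eq']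

lemma iidMeasure_singleton {d n : ℕ} (π : Fin d → ℝ) (x : Fin n → Fin d) :
    iidMeasure n π {x} = ∏ s, ENNReal.ofReal (π (x s)) := by
  rw [iidMeasure, ← Set.univ_pi_singleton, Measure.pi_pi]
  simp [catMeasure_singleton]

lemma Emean {d n : ℕ} (π : Fin d → ℝ) (hs : ∑ j, π j = 1) (hn : (n:ℝ) ≠ 0) (j : Fin d) :
    ∑ x : Fin n → Fin d, (∏ s, π (x s)) * empFreq x j = π j := by
  have h1 : ∀ x : Fin n → Fin d, (∏ s, π (x s)) * empFreq x j
      = (∑ s, (∏ s', π (x s')) * (if x s = j then (1:ℝ) else 0)) / n := by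
    intro x
    rw [empFreq_eq, ← mul_div_assoc, Finset.mul_sum]
  simp_rw [h1]
  rw [← Finset.sum_div, Finset.sum_comm]
  have h2 : ∀ s : Fin n, ∑ x : Fin n → Fin d, (∏ s', π (x s')) * (if x s = j then (1:ℝ) else 0)
      = π j := by
    intro s
    rw [E1 π hs s (fun k => if k = j then (1:ℝ) else 0)]
    simp [Finset.sum_ite_eq']
  simp_rw [h2]
  rw [Finset.sum_const]
  simp only [Finset.card_univ, Fintype.card_fin, nsmul_eq_mul]
  field_simp

lemma Esq {d n : ℕ} (π : Fin d → ℝ) (hs : ∑ j, π j = 1) (hn : (n:ℝ) ≠ 0) (j : Fin d) :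
    ∑ x : Fin n → Fin d, (∏ s, π (x s)) * (empFreq x j) ^ 2
      = ((n:ℝ) * π j + (n:ℝ) * ((n:ℝ) - 1) * (π j) ^ 2) / (n:ℝ) ^ 2 := by
  have h1 : ∀ x : Fin n → Fin d, (∏ s, π (x s)) * (empFreq x j) ^ 2
      = (∑ s, ∑ t, (∏ s', π (x s')) *
          ((if x s = j then (1:ℝ) else 0) * (if x t = j then (1:ℝ) else 0))) / (n:ℝ) ^ 2 := by
    intro x
    rw [empFreq_eq, div_pow, ← mul_div_assoc]
    congr 1
    rw [sq, Finset.sum_mul_sum, Finset.mul_sum]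
    apply Finset.sum_congr rfl; intro s _
    rw [Finset.mul_sum]
  simp_rw [h1]
  rw [← Finset.sum_div]
  congr 1
  rw [Finset.sum_comm]
  have h2 : ∀ s : Fin n, ∑ x : Fin n → Fin d, ∑ t, (∏ s', π (x s')) *
        ((if x s = j then (1:ℝ) else 0) * (if x t = j then (1:ℝ) else 0))
      = ∑ t : Fin n, (if t = s then π j else (π j) ^ 2) := by
    intro s
    rw [Finset.sum_comm]
    apply Finset.sum_congr rfl
    intro t _
    by_cases hts : t = s
    · subst hts
      simp only [if_pos rfl]
      have : ∀ x : Fin n → Fin d, (∏ s', π (x s')) *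
          ((if x t = j then (1:ℝ) else 0) * (if x t = j then (1:ℝ) else 0))
          = (∏ s', π (x s')) * (if x t = j then (1:ℝ) else 0) := by
        intro x; by_cases h : x t = j <;> simp [h]
      simp_rw [this]
      rw [E1 π hs t (fun k => if k = j then (1:ℝ) else 0)]
      simp [Finset.sum_ite_eq']
    · rw [if_neg hts]
      have hst : s ≠ t := fun h => hts h.symm
      rw [E2 π hs hst (fun k => if k = j then (1:ℝ) else 0) (fun k => if k = j then (1:ℝ) else 0)]
      simp [Finset.sum_ite_eq', sq]
  simp_rw [h2]
  rw [Finset.sum_comm]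
  have h4 : ∀ t : Fin n, ∑ s : Fin n, (if t = s then π j else (π j) ^ 2)
      = (π j - (π j)^2) + (n:ℝ) * (π j)^2 := by
    intro t
    have : ∀ s : Fin n, (if t = s then π j else (π j) ^ 2)
        = (if s = t then π j - (π j)^2 else 0) + (π j)^2 := by
      intro s
      by_cases h : s = t
      · subst h
        simp only [if_true]
        ring
      · rw [if_neg (fun hh => h hh.symm), if_neg h, zero_add]
    simp_rw [this]
    rw [Finset.sum_add_distrib, Finset.sum_ite_eq' Finset.univ t (fun _ => π j - (π j)^2)]
    simp [Finset.card_univ, mul_comm]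
  simp_rw [h4]
  rw [Finset.sum_const]
  simp only [Finset.card_univ, Fintype.card_fin, nsmul_eq_mul]
  ring


/-- The U-statistic
`T_U = (n₁/(n₁−1)) π̂₁ᵀπ̂₁ − 1/(n₁−1) + (n₂/(n₂−1)) π̂₂ᵀπ̂₂ − 1/(n₂−1) − 2 π̂₁ᵀπ̂₂`. -/
noncomputable def TUstat {d n₁ n₂ : ℕ} (x₁ : Fin n₁ → Fin d) (x₂ : Fin n₂ → Fin d) : ℝ :=
  (n₁ : ℝ) / ((n₁ : ℝ) - 1) * ∑ j, (empFreq x₁ j) ^ 2 - 1 / ((n₁ : ℝ) - 1)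
    + (n₂ : ℝ) / ((n₂ : ℝ) - 1) * ∑ j, (empFreq x₂ j) ^ 2 - 1 / ((n₂ : ℝ) - 1)
    - 2 * ∑ j, empFreq x₁ j * empFreq x₂ j

/-- `E(T_U) = ‖π₁ − π₂‖²`: `T_U` is an unbiased estimator of the squared Euclidean
distance between the two probability vectors. -/
theorem stmt_1 {d : ℕ} (hd : 2 ≤ d) (π₁ π₂ : Fin d → ℝ)
    (hnn₁ : ∀ j, 0 ≤ π₁ j) (hsum₁ : ∑ j, π₁ j = 1)
    (hnn₂ : ∀ j, 0 ≤ π₂ j) (hsum₂ : ∑ j, π₂ j = 1)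
    (n₁ n₂ : ℕ) (hn₁ : 2 ≤ n₁) (hn₂ : 2 ≤ n₂) :
    ∫ ω : (Fin n₁ → Fin d) × (Fin n₂ → Fin d), TUstat ω.1 ω.2
        ∂((iidMeasure n₁ π₁).prod (iidMeasure n₂ π₂))
      = ∑ j, (π₁ j - π₂ j) ^ 2 := by
  have hn₁' : (n₁ : ℝ) ≠ 0 := Nat.cast_ne_zero.2 (by omega)
  have hn₂' : (n₂ : ℝ) ≠ 0 := Nat.cast_ne_zero.2 (by omega)
  have h2n₁ : (2:ℝ) ≤ (n₁:ℝ) := by exact_mod_cast hn₁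
  have h2n₂ : (2:ℝ) ≤ (n₂:ℝ) := by exact_mod_cast hn₂
  have hm₁ : (n₁ : ℝ) - 1 ≠ 0 := by linarith
  have hm₂ : (n₂ : ℝ) - 1 ≠ 0 := by linarith
  haveI : IsFiniteMeasure (iidMeasure n₁ π₁) := by rw [iidMeasure]; infer_instance
  haveI : IsFiniteMeasure (iidMeasure n₂ π₂) := by rw [iidMeasure]; infer_instance
  rw [integral_fintype Integrable.of_finite]
  rw [Fintype.sum_prod_type]
  have hsing : ∀ (x₁ : Fin n₁ → Fin d) (x₂ : Fin n₂ → Fin d),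
      ((((iidMeasure n₁ π₁).prod (iidMeasure n₂ π₂))) {(x₁, x₂)}).toReal
        = (∏ s, π₁ (x₁ s)) * (∏ s, π₂ (x₂ s)) := by
    intro x₁ x₂
    rw [← Set.singleton_prod_singleton, Measure.prod_prod, iidMeasure_singleton,
        iidMeasure_singleton, ENNReal.toReal_mul, ENNReal.toReal_prod, ENNReal.toReal_prod]
    congr 1
    · exact Finset.prod_congr rfl fun s _ => ENNReal.toReal_ofReal (hnn₁ _)
    · exact Finset.prod_congr rfl fun s _ => ENNReal.toReal_ofReal (hnn₂ _)
  simp_rw [measureReal_def, hsing, smul_eq_mul]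
  -- basic total-mass facts
  have hW₁ : ∑ x : Fin n₁ → Fin d, ∏ s, π₁ (x s) = 1 := by
    rw [sum_prod_eq (fun _ j => π₁ j)]
    simp [hsum₁]
  have hW₂ : ∑ x : Fin n₂ → Fin d, ∏ s, π₂ (x s) = 1 := by
    rw [sum_prod_eq (fun _ j => π₂ j)]
    simp [hsum₂]
  -- expectations of quadratic terms
  have hQ₁ : ∑ x : Fin n₁ → Fin d, (∏ s, π₁ (x s)) * (∑ j, empFreq x j ^ 2)
      = ((n₁:ℝ) + (n₁:ℝ) * ((n₁:ℝ) - 1) * ∑ j, π₁ j ^ 2) / (n₁:ℝ) ^ 2 := by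
    simp_rw [Finset.mul_sum]
    rw [Finset.sum_comm]
    rw [Finset.sum_congr rfl fun j _ => Esq π₁ hsum₁ hn₁' j, ← Finset.sum_div]
    congr 1
    rw [Finset.sum_add_distrib, ← Finset.mul_sum, ← Finset.mul_sum, hsum₁, mul_one]
  have hQ₂ : ∑ x : Fin n₂ → Fin d, (∏ s, π₂ (x s)) * (∑ j, empFreq x j ^ 2)
      = ((n₂:ℝ) + (n₂:ℝ) * ((n₂:ℝ) - 1) * ∑ j, π₂ j ^ 2) / (n₂:ℝ) ^ 2 := by
    simp_rw [Finset.mul_sum]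
    rw [Finset.sum_comm]
    rw [Finset.sum_congr rfl fun j _ => Esq π₂ hsum₂ hn₂' j, ← Finset.sum_div]
    congr 1
    rw [Finset.sum_add_distrib, ← Finset.mul_sum, ← Finset.mul_sum, hsum₂, mul_one]
  -- the five double sums
  have hA : ∑ x₁ : Fin n₁ → Fin d, ∑ x₂ : Fin n₂ → Fin d,
      ((∏ s, π₁ (x₁ s)) * (∏ s, π₂ (x₂ s))) * (∑ j, empFreq x₁ j ^ 2)
      = ((n₁:ℝ) + (n₁:ℝ) * ((n₁:ℝ) - 1) * ∑ j, π₁ j ^ 2) / (n₁:ℝ) ^ 2 := by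
    have : ∀ x₁ : Fin n₁ → Fin d, ∑ x₂ : Fin n₂ → Fin d,
        ((∏ s, π₁ (x₁ s)) * (∏ s, π₂ (x₂ s))) * (∑ j, empFreq x₁ j ^ 2)
        = (∏ s, π₁ (x₁ s)) * (∑ j, empFreq x₁ j ^ 2) := by
      intro x₁
      have e : ∀ x₂ : Fin n₂ → Fin d,
          ((∏ s, π₁ (x₁ s)) * (∏ s, π₂ (x₂ s))) * (∑ j, empFreq x₁ j ^ 2)
          = ((∏ s, π₁ (x₁ s)) * (∑ j, empFreq x₁ j ^ 2)) * (∏ s, π₂ (x₂ s)) := by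
        intro x₂; ring
      simp_rw [e]
      rw [← Finset.mul_sum, hW₂, mul_one]
    simp_rw [this]
    exact hQ₁
  have hB : ∑ x₁ : Fin n₁ → Fin d, ∑ x₂ : Fin n₂ → Fin d,
      ((∏ s, π₁ (x₁ s)) * (∏ s, π₂ (x₂ s))) * (∑ j, empFreq x₂ j ^ 2)
      = ((n₂:ℝ) + (n₂:ℝ) * ((n₂:ℝ) - 1) * ∑ j, π₂ j ^ 2) / (n₂:ℝ) ^ 2 := by
    have : ∀ x₁ : Fin n₁ → Fin d, ∑ x₂ : Fin n₂ → Fin d,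
        ((∏ s, π₁ (x₁ s)) * (∏ s, π₂ (x₂ s))) * (∑ j, empFreq x₂ j ^ 2)
        = (∏ s, π₁ (x₁ s)) * (∑ x₂ : Fin n₂ → Fin d, (∏ s, π₂ (x₂ s)) * (∑ j, empFreq x₂ j ^ 2)) := by
      intro x₁
      rw [Finset.mul_sum]
      apply Finset.sum_congr rfl
      intro x₂ _
      ring
    simp_rw [this]
    rw [← Finset.sum_mul, hW₁, one_mul, hQ₂]
  have hOne : ∑ x₁ : Fin n₁ → Fin d, ∑ x₂ : Fin n₂ → Fin d,
      (∏ s, π₁ (x₁ s)) * (∏ s, π₂ (x₂ s)) = 1 := by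
    rw [← Finset.sum_mul_sum, hW₁, hW₂, one_mul]
  have hC : ∑ x₁ : Fin n₁ → Fin d, ∑ x₂ : Fin n₂ → Fin d,
      ((∏ s, π₁ (x₁ s)) * (∏ s, π₂ (x₂ s))) * (∑ j, empFreq x₁ j * empFreq x₂ j)
      = ∑ j, π₁ j * π₂ j := by
    have step : ∀ j : Fin d, ∑ x₁ : Fin n₁ → Fin d, ∑ x₂ : Fin n₂ → Fin d,
        ((∏ s, π₁ (x₁ s)) * (∏ s, π₂ (x₂ s))) * (empFreq x₁ j * empFreq x₂ j)
        = π₁ j * π₂ j := by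
      intro j
      have e : ∀ (x₁ : Fin n₁ → Fin d) (x₂ : Fin n₂ → Fin d),
          ((∏ s, π₁ (x₁ s)) * (∏ s, π₂ (x₂ s))) * (empFreq x₁ j * empFreq x₂ j)
          = ((∏ s, π₁ (x₁ s)) * empFreq x₁ j) * ((∏ s, π₂ (x₂ s)) * empFreq x₂ j) := by
        intro x₁ x₂; ring
      simp_rw [e]
      rw [← Finset.sum_mul_sum, Emean π₁ hsum₁ hn₁' j, Emean π₂ hsum₂ hn₂' j]
    simp_rw [Finset.mul_sum]
    have swap1 : ∀ x₁ : Fin n₁ → Fin d, ∑ x₂ : Fin n₂ → Fin d, ∑ j,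
        ((∏ s, π₁ (x₁ s)) * (∏ s, π₂ (x₂ s))) * (empFreq x₁ j * empFreq x₂ j)
        = ∑ j, ∑ x₂ : Fin n₂ → Fin d,
          ((∏ s, π₁ (x₁ s)) * (∏ s, π₂ (x₂ s))) * (empFreq x₁ j * empFreq x₂ j) :=
      fun x₁ => Finset.sum_comm
    simp_rw [swap1]
    rw [Finset.sum_comm]
    exact Finset.sum_congr rfl fun j _ => step j
  -- expand TUstat and split the double sum
  have expand : ∀ (x₁ : Fin n₁ → Fin d) (x₂ : Fin n₂ → Fin d),
      ((∏ s, π₁ (x₁ s)) * (∏ s, π₂ (x₂ s))) * TUstat x₁ x₂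
      = (n₁:ℝ) / ((n₁:ℝ) - 1) * (((∏ s, π₁ (x₁ s)) * (∏ s, π₂ (x₂ s))) * (∑ j, empFreq x₁ j ^ 2))
        - 1 / ((n₁:ℝ) - 1) * ((∏ s, π₁ (x₁ s)) * (∏ s, π₂ (x₂ s)))
        + (n₂:ℝ) / ((n₂:ℝ) - 1) * (((∏ s, π₁ (x₁ s)) * (∏ s, π₂ (x₂ s))) * (∑ j, empFreq x₂ j ^ 2))
        - 1 / ((n₂:ℝ) - 1) * ((∏ s, π₁ (x₁ s)) * (∏ s, π₂ (x₂ s)))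
        - 2 * (((∏ s, π₁ (x₁ s)) * (∏ s, π₂ (x₂ s))) * (∑ j, empFreq x₁ j * empFreq x₂ j)) := by
    intro x₁ x₂
    rw [TUstat]
    ring
  simp_rw [expand]
  simp_rw [Finset.sum_sub_distrib, Finset.sum_add_distrib]
  simp_rw [← Finset.mul_sum]
  simp only [hW₁, hW₂, mul_one]
  simp_rw [Finset.sum_sub_distrib]
  simp_rw [← Finset.mul_sum]
  simp only [hW₁, hW₂, mul_one]
  rw [hA, hB, hC]
  have hRHS : ∑ j, (π₁ j - π₂ j) ^ 2
      = ∑ j, π₁ j ^ 2 + ∑ j, π₂ j ^ 2 - 2 * ∑ j, π₁ j * π₂ j := by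
    rw [← Finset.sum_add_distrib, Finset.mul_sum, ← Finset.sum_sub_distrib]
    apply Finset.sum_congr rfl
    intro j _
    ring
  rw [hRHS]
  field_simp
  ring
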